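/- Let r > 0 and let Γ ⊆ ℝ² be a compact set with Γ ∩ closedBall(0,r) = ∅ such that 0 lies in a bounded connected component of ℝ² \ Γ. Then closedBall(0,r) ⊆ convexHull ℝ Γ. Consequently, every line ℓ ⊆ ℝ² such that convexHull ℝ Γ is contained in one of the two closed half-planes bounded by ℓ satisfies infDist(0, ℓ) ≥ r. -/

import Mathlib

/-!
If `x` lay outside the (closed, by Carathéodory) convex hull of `Γ`, a separating functional
would give an open half-plane through `x` avoiding `Γ`. Being convex, it lies in the component
of `x` in `Γᶜ`, which for `x` in the ball is the bounded component of the origin; but half-planes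
are unbounded. The distance bound follows since the half-plane `⟪z, v⟫ ≤ a` contains the ball.
-/

open Metric RealInnerProductSpace

open Set Bornology

section ConvexHull

variable {E : Type*} [AddCommGroup E] [Module ℝ E]

theorem convexHull_eq_biUnion_image_stdSimplex [FiniteDimensional ℝ E] (s : Set E) :
    convexHull ℝ s = ⋃ k ≤ Module.finrank ℝ E + 1,
      (fun p : (Fin k → ℝ) × (Fin k → E) ↦ ∑ i, p.1 i • p.2 i) ''
        (stdSimplex ℝ (Fin k) ×ˢ univ.pi fun _ ↦ s) := by
  refine Subset.antisymm ?_ ?_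
  · intro x hx
    obtain ⟨ι, _, z, w, hzs, hz, hw₀, hw₁, rfl⟩ := eq_pos_convex_span_of_mem_convexHull hx
    have hcard : Fintype.card ι ≤ Module.finrank ℝ E + 1 :=
      hz.card_le_finrank_succ.trans (Nat.succ_le_succ (Submodule.finrank_le _))
    set e := (Fintype.equivFin ι).symm
    refine mem_biUnion (x := Fintype.card ι) hcard ⟨(w ∘ e, z ∘ e), ⟨⟨fun i ↦ (hw₀ _).le, ?_⟩,
      fun i _ ↦ hzs ⟨_, rfl⟩⟩, ?_⟩
    · simpa only [Function.comp_apply, e.sum_comp] using hw₁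
    · simp only [Function.comp_apply]
      exact e.sum_comp fun i ↦ w i • z i
  · refine iUnion₂_subset fun k _ ↦ ?_
    rintro _ ⟨⟨w, z⟩, ⟨⟨hw₀, hw₁⟩, hz⟩, rfl⟩
    exact mem_convexHull_of_exists_fintype w z hw₀ hw₁ (fun i ↦ hz i (mem_univ i)) rfl

theorem IsCompact.convexHull [TopologicalSpace E] [IsTopologicalAddGroup E] [ContinuousSMul ℝ E]
    [FiniteDimensional ℝ E] {s : Set E} (hs : IsCompact s) : IsCompact (convexHull ℝ s) := by
  rw [convexHull_eq_biUnion_image_stdSimplex]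
  exact (finite_Iic _).isCompact_biUnion fun k _ ↦
    ((isCompact_stdSimplex ℝ _).prod (isCompact_univ_pi fun _ ↦ hs)).image (by fun_prop)

end ConvexHull

section Normed

variable {E : Type*} [NormedAddCommGroup E] [NormedSpace ℝ E] [Nontrivial E]

theorem ContinuousLinearMap.not_isBounded_setOf_lt (f : E →L[ℝ] ℝ) {u : ℝ} {x : E}
    (hx : f x < u) : ¬IsBounded {z | f z < u} := by
  by_cases hf : (f : E →ₗ[ℝ] ℝ) = 0
  · have hf₀ : ∀ z, f z = 0 := fun z ↦ LinearMap.congr_fun hf z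
    have : {z | f z < u} = univ := eq_univ_of_forall fun z ↦ by simpa [hf₀] using hx
    rw [this]
    exact NormedSpace.unbounded_univ ℝ E
  · intro hb
    have hIio : Iio u ⊆ f '' {z | f z < u} := fun t ht ↦ by
      obtain ⟨z, rfl⟩ := LinearMap.surjective hf t
      exact ⟨z, ht, rfl⟩
    exact not_bddBelow_Iio u ((hb.image f).subset hIio).bddBelow

theorem mem_closure_convexHull_of_isBounded_connectedComponentIn {s : Set E} {x : E}
    (hx : IsBounded (connectedComponentIn sᶜ x)) : x ∈ closure (convexHull ℝ s) := by
  by_contra hxs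
  obtain ⟨f, u, hfx, hfs⟩ :=
    geometric_hahn_banach_point_closed (convex_convexHull ℝ s).closure isClosed_closure hxs
  have hHs : {z | f z < u} ⊆ sᶜ := fun z hz hzs ↦
    (hfs z (subset_closure (subset_convexHull ℝ s hzs))).not_gt hz
  have hH : {z | f z < u} ⊆ connectedComponentIn sᶜ x :=
    (convex_halfSpace_lt f.isLinear u).isPreconnected.subset_connectedComponentIn hfx hHs
  exact f.not_isBounded_setOf_lt hfx (hx.subset hH)

theorem closedBall_subset_convexHull_of_isBounded_connectedComponentIn [FiniteDimensional ℝ E]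
    {s : Set E} (hs : IsCompact s) {c : E} {r : ℝ} (hsr : Disjoint s (closedBall c r))
    (hc : IsBounded (connectedComponentIn sᶜ c)) : closedBall c r ⊆ convexHull ℝ s := by
  intro x hx
  have hball : closedBall c r ⊆ connectedComponentIn sᶜ c :=
    (convex_closedBall c r).isPreconnected.subset_connectedComponentIn
      (mem_closedBall_self (nonempty_closedBall.1 ⟨x, hx⟩)) hsr.subset_compl_left
  rw [← hs.convexHull.isClosed.closure_eq]
  exact mem_closure_convexHull_of_isBounded_connectedComponentIn
    (connectedComponentIn_eq (hball hx) ▸ hc)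

end Normed

theorem le_infDist_setOf_inner_eq {E : Type*} [NormedAddCommGroup E] [InnerProductSpace ℝ E]
    {v : E} (hv : v ≠ 0) {a r : ℝ} (h : closedBall 0 r ⊆ {z | ⟪z, v⟫ ≤ a}) :
    r ≤ infDist 0 {z | ⟪z, v⟫ = a} := by
  rcases lt_or_ge r 0 with hr | hr
  · exact hr.le.trans infDist_nonneg
  have hv' : 0 < ‖v‖ := norm_pos_iff.2 hv
  have hra : r * ‖v‖ ≤ a := by
    have := h (show (r / ‖v‖) • v ∈ closedBall 0 r by
      simp [norm_smul, abs_of_nonneg hr, hv'.ne'])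
    simpa [real_inner_smul_left, real_inner_self_eq_norm_sq, hv'.ne', pow_two, div_mul_eq_mul_div,
      mul_div_assoc] using this
  have hline : {z : E | ⟪z, v⟫ = a}.Nonempty :=
    ⟨(a / ‖v‖ ^ 2) • v, by simp [real_inner_smul_left, hv]⟩
  refine (le_infDist hline).2 fun y hy ↦ ?_
  rw [dist_zero_left]
  have : r * ‖v‖ ≤ ‖y‖ * ‖v‖ := hra.trans (hy ▸ real_inner_le_norm y v)
  exact le_of_mul_le_mul_right this hv'

theorem stmt6_general (r : ℝ) (Γ : Set (EuclideanSpace ℝ (Fin 2))) (hΓ : IsCompact Γ)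
    (hΓb : Γ ∩ closedBall 0 r = ∅)
    (h0 : Bornology.IsBounded (connectedComponentIn Γᶜ 0)) :
    closedBall (0 : EuclideanSpace ℝ (Fin 2)) r ⊆ convexHull ℝ Γ ∧
      ∀ (v : EuclideanSpace ℝ (Fin 2)) (a : ℝ), v ≠ 0 →
        convexHull ℝ Γ ⊆ {z | ⟪z, v⟫ ≤ a} →
        r ≤ infDist (0 : EuclideanSpace ℝ (Fin 2)) {z | ⟪z, v⟫ = a} := by
  have hball : closedBall (0 : EuclideanSpace ℝ (Fin 2)) r ⊆ convexHull ℝ Γ :=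
    closedBall_subset_convexHull_of_isBounded_connectedComponentIn hΓ
      (disjoint_iff_inter_eq_empty.2 hΓb) h0
  exact ⟨hball, fun v a hv hva ↦ le_infDist_setOf_inner_eq hv (hball.trans hva)⟩

/-- If a compact planar set `Γ` avoids the closed ball of radius `r` about the origin and
encircles the origin (i.e. the origin lies in a bounded connected component of the
complement), then the closed ball is contained in the convex hull of `Γ`; consequently
every line bounding a closed half-plane containing the convex hull is at distance at
least `r` from the origin. -/
theorem stmt6 (r : ℝ) (hr : 0 < r) (Γ : Set (EuclideanSpace ℝ (Fin 2))) (hΓ : IsCompact Γ)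
    (hΓb : Γ ∩ closedBall 0 r = ∅)
    (h0 : Bornology.IsBounded (connectedComponentIn Γᶜ 0)) :
    closedBall (0 : EuclideanSpace ℝ (Fin 2)) r ⊆ convexHull ℝ Γ ∧
      ∀ (v : EuclideanSpace ℝ (Fin 2)) (a : ℝ), v ≠ 0 →
        convexHull ℝ Γ ⊆ {z | ⟪z, v⟫ ≤ a} →
        r ≤ infDist (0 : EuclideanSpace ℝ (Fin 2)) {z | ⟪z, v⟫ = a} :=
  stmt6_general r Γ hΓ hΓb h0
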